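/- Let $d = 3$ and let $n_1 > n_2 \ge 1$ be integers. Then: (a) $S_{(n_1,n_2,0)} \subseteq S_{(n_1+1,n_2,0)}$ and the index $[S_{(n_1+1,n_2,0)} : S_{(n_1,n_2,0)}]$ equals $q^2$ (edge of type 8 in the weight table); (b) if moreover $n_1 > n_2 + 1$, then the intersection $S_{(n_1,n_2,0)} \cap S_{(n_1,n_2+1,0)}$ has cardinality $(q-1)^3 q^{2n_1+2}$, and its index in each of $S_{(n_1,n_2,0)}$ and $S_{(n_1,n_2+1,0)}$ equals $q$ (edge of type 11 in the weight table). -/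

import Mathlib

open Matrix Polynomial

noncomputable section

/-- `t = X⁻¹` in the Laurent series field `F = 𝔽_q((X))`. -/
def tF (Fq : Type) [Field Fq] : LaurentSeries Fq := HahnSeries.single (-1 : ℤ) (1 : Fq)

/-- The embedding of the polynomial ring `𝔽_q[t]` into `F = 𝔽_q((X))`, sending the
polynomial variable to `t = X⁻¹`. -/
def polyToF (Fq : Type) [Field Fq] : Polynomial Fq →+* LaurentSeries Fq :=
  Polynomial.eval₂RingHom (HahnSeries.C) (tF Fq)

/-- The lattice `l_n̄ = t^{n₁}𝒪e₁ ⊕ ⋯ ⊕ t^{n_d}𝒪e_d` as an `𝒪`-submodule of `F^d`,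
where `𝒪 = 𝔽_q[[X]]` acts on `F = 𝔽_q((X))` via the inclusion, and
`t^{n} = HahnSeries.single (-n) 1`. -/
def lattM (Fq : Type) [Field Fq] {d : ℕ} (n : Fin d → ℤ) :
    Submodule (PowerSeries Fq) (Fin d → LaurentSeries Fq) :=
  Submodule.span (PowerSeries Fq)
    (Set.range fun i : Fin d =>
      (HahnSeries.single (-(n i)) (1 : Fq) : LaurentSeries Fq) •
        (Pi.single i (1 : LaurentSeries Fq) : Fin d → LaurentSeries Fq))

/-- The image `g L` of an `𝒪`-submodule `L ⊆ F^d` under a matrix `g ∈ M_d(F)`. -/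
def actM (Fq : Type) [Field Fq] {d : ℕ} (g : Matrix (Fin d) (Fin d) (LaurentSeries Fq))
    (L : Submodule (PowerSeries Fq) (Fin d → LaurentSeries Fq)) :
    Submodule (PowerSeries Fq) (Fin d → LaurentSeries Fq) :=
  L.map ((g.mulVecLin).restrictScalars (PowerSeries Fq))

/-- The image `a L` of an `𝒪`-submodule `L ⊆ F^d` under scalar multiplication by `a ∈ F`. -/
def scaleM (Fq : Type) [Field Fq] {d : ℕ} (a : LaurentSeries Fq)
    (L : Submodule (PowerSeries Fq) (Fin d → LaurentSeries Fq)) :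
    Submodule (PowerSeries Fq) (Fin d → LaurentSeries Fq) :=
  L.map ((LinearMap.lsmul (LaurentSeries Fq) (Fin d → LaurentSeries Fq) a).restrictScalars
    (PowerSeries Fq))

/-- The image in `M_d(F)` of a matrix over `𝔽_q[t]`. -/
def glToF (Fq : Type) [Field Fq] {d : ℕ} (γ : GL (Fin d) (Polynomial Fq)) :
    Matrix (Fin d) (Fin d) (LaurentSeries Fq) :=
  (γ : Matrix (Fin d) (Fin d) (Polynomial Fq)).map (polyToF Fq)

/-- The stabilizer `S_n̄ = {γ ∈ GL_d(𝔽_q[t]) : γ l_n̄ = l_n̄}`. -/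
def Stab (Fq : Type) [Field Fq] {d : ℕ} (n : Fin d → ℤ) :
    Set (GL (Fin d) (Polynomial Fq)) :=
  {γ | actM Fq (glToF Fq γ) (lattM Fq n) = lattM Fq n}

/-- `N_T^d`: integer tuples `n₁ ≥ n₂ ≥ ⋯ ≥ n_d = 0`. -/
def NT {d : ℕ} (n : Fin d → ℤ) : Prop :=
  (∀ i j : Fin d, i ≤ j → n j ≤ n i) ∧ ∀ i : Fin d, (i : ℕ) = d - 1 → n i = 0

/-- The difference sequence `m_i = n_i - n_{i+1}`. -/
def mdiff {d : ℕ} (n : Fin d → ℤ) (i : ℕ) (h : i + 1 < d) : ℤ :=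
  n ⟨i, Nat.lt_of_succ_lt h⟩ - n ⟨i + 1, h⟩

end

/-!
For the `X`-adic valuation `v` on `F`, the lattice `l_n` is `{x | v (x i) ≤ exp (n i)}`, so
`γ l_n ⊆ l_n` says exactly that `deg γᵢⱼ ≤ nᵢ - nⱼ`. These bounds pass to the adjugate, because the
weights `nᵢ - nⱼ` telescope along every permutation, and `det γ` is a nonzero constant; hence they
cut out the whole stabilizer. For strictly decreasing `n` they force `γ` to be upper triangular
with invertible constant diagonal, which gives `|S_n| = (q - 1)^d q^{∑_{i<j} (nᵢ - nⱼ + 1)}`, and an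
intersection of two stabilizers is cut out by the entrywise minimum of the bounds. For `d = 3` the
exponents are `2n₁ + 3` for `S_{(n₁,n₂,0)}` and `2n₁ + 2` for the intersection.
-/

open WithZero

theorem WithZero.exp_sum {ι : Type*} (s : Finset ι) (f : ι → ℤ) :
    exp (∑ i ∈ s, f i) = ∏ i ∈ s, exp (f i) := by
  simp only [exp, ofAdd_sum]
  exact map_prod WithZero.coeMonoidHom _ _

namespace Valuation

variable {R ι : Type*} [CommRing R] [Fintype ι] [DecidableEq ι] (v : Valuation R ℤᵐ⁰)

theorem map_det_le_exp (M : Matrix ι ι R) (a b : ι → ℤ)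
    (h : ∀ i j, v (M i j) ≤ exp (a i - b j)) :
    v M.det ≤ exp (∑ i, a i - ∑ j, b j) := by
  rw [Matrix.det_apply]
  refine v.map_sum_le fun σ _ => ?_
  have hsign : v (Equiv.Perm.sign σ • ∏ i, M (σ i) i) = v (∏ i, M (σ i) i) := by
    rcases Int.units_eq_one_or (Equiv.Perm.sign σ) with h | h <;> simp [h]
  calc v (Equiv.Perm.sign σ • ∏ i, M (σ i) i) = ∏ i, v (M (σ i) i) := by rw [hsign, map_prod]
    _ ≤ ∏ i, exp (a (σ i) - b i) := Finset.prod_le_prod' fun i _ => h _ _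
    _ = exp (∑ i, a i - ∑ j, b j) := by
      rw [← exp_sum, Finset.sum_sub_distrib, Equiv.sum_comp σ a]

theorem map_adjugate_le_exp (M : Matrix ι ι R) (n : ι → ℤ)
    (h : ∀ i j, v (M i j) ≤ exp (n i - n j)) (i j : ι) :
    v (M.adjugate i j) ≤ exp (n i - n j) := by
  rw [Matrix.adjugate_apply]
  have hrow : ∀ r k, v (M.updateRow j (Pi.single i 1) r k) ≤
      exp (Function.update n j (n i) r - n k) := by
    intro r k
    rcases eq_or_ne r j with rfl | hr
    · rcases eq_or_ne k i with rfl | hk <;> simp [*]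
    · simpa [hr] using h r k
  convert v.map_det_le_exp _ _ _ hrow using 2
  rw [Finset.sum_update_of_mem (Finset.mem_univ j), ← Finset.add_sum_erase _ _ (Finset.mem_univ j),
    Finset.sdiff_singleton_eq_erase]
  ring

end Valuation

section Lattice

variable {K : Type} [Field K] {d : ℕ}

theorem lattM_eq_span_single (n : Fin d → ℤ) :
    lattM K n = Submodule.span (PowerSeries K)
      (Set.range fun i => Pi.single i (HahnSeries.single (-(n i)) 1)) := by
  simp only [lattM, ← Pi.single_smul, smul_eq_mul, mul_one]

theorem mem_lattM_iff (n : Fin d → ℤ) (x : Fin d → LaurentSeries K) :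
    x ∈ lattM K n ↔ ∀ i, Valued.v (x i) ≤ exp (n i) := by
  rw [lattM_eq_span_single]
  constructor
  · intro hx
    induction hx using Submodule.span_induction with
    | mem y hy =>
      obtain ⟨i, rfl⟩ := hy
      intro j
      dsimp only
      rcases eq_or_ne j i with rfl | hj
      · rw [Pi.single_eq_same, LaurentSeries.valuation_single_zpow, neg_neg]
      · simp [hj]
    | zero => simp
    | add y z _ _ hy hz => exact fun i => Valued.v.map_add_le (hy i) (hz i)
    | smul c y _ hy =>
      intro i
      rw [Pi.smul_apply, Algebra.smul_def, map_mul]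
      exact mul_le_of_le_one_of_le ((LaurentSeries.val_le_one_iff_eq_coe K _).mpr ⟨c, rfl⟩)
        (hy i)
  · intro hx
    rw [← Finset.univ_sum_single x]
    refine Submodule.sum_mem _ fun i _ => ?_
    obtain ⟨c, hc⟩ := (LaurentSeries.val_le_one_iff_eq_coe K
      (HahnSeries.single (n i) (1 : K) * x i)).mp <| by
        calc Valued.v (HahnSeries.single (n i) (1 : K) * x i)
            ≤ exp (-n i) * exp (n i) := by
              rw [map_mul, LaurentSeries.valuation_single_zpow]; gcongr; exact hx i
          _ = 1 := by rw [← exp_add, neg_add_cancel, exp_zero]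
    have hxi : x i = c • (HahnSeries.single (-(n i)) (1 : K) : LaurentSeries K) := by
      rw [Algebra.smul_def, LaurentSeries.coe_algebraMap, hc, mul_comm, ← mul_assoc,
        HahnSeries.single_mul_single, neg_add_cancel, one_mul, HahnSeries.single_zero_one, one_mul]
    rw [hxi, Pi.single_smul]
    exact Submodule.smul_mem _ _ (Submodule.subset_span ⟨i, rfl⟩)

theorem actM_le_lattM_iff (g : Matrix (Fin d) (Fin d) (LaurentSeries K)) (n : Fin d → ℤ) :
    actM K g (lattM K n) ≤ lattM K n ↔ ∀ i j, Valued.v (g i j) ≤ exp (n i - n j) := by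
  rw [actM, Submodule.map_le_iff_le_comap]
  nth_rw 1 [lattM_eq_span_single]
  rw [Submodule.span_le, Set.range_subset_iff, forall_comm]
  refine forall_congr' fun j => ?_
  simp only [SetLike.mem_coe, Submodule.mem_comap, LinearMap.restrictScalars_apply,
    Matrix.mulVecLin_apply, mem_lattM_iff, Matrix.mulVec_single]
  refine forall_congr' fun i => ?_
  rw [Pi.smul_apply, MulOpposite.smul_eq_mul_unop, MulOpposite.unop_op, Matrix.col_apply, map_mul,
    LaurentSeries.valuation_single_zpow, neg_neg, exp_sub, le_div_iff₀ exp_pos]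

end Lattice

section DegreeBounds

variable {K : Type} [Field K]

theorem coeff_polyToF (p : K[X]) (k : ℤ) :
    (polyToF K p).coeff k = if k ≤ 0 then p.coeff (-k).toNat else 0 := by
  induction p using Polynomial.induction_on' with
  | add f g hf hg =>
    rw [map_add, HahnSeries.coeff_add, hf, hg, Polynomial.coeff_add]
    split_ifs <;> simp
  | monomial m a =>
    rw [polyToF, Polynomial.coe_eval₂RingHom, Polynomial.eval₂_monomial, tF,
      HahnSeries.single_pow, one_pow, HahnSeries.C_apply, HahnSeries.single_mul_single, zero_add,
      HahnSeries.coeff_single, Polynomial.coeff_monomial, nsmul_eq_mul, mul_neg_one]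
    by_cases h : k = -m
    · simp [h]
    · rw [if_neg h]
      split_ifs <;> first | rfl | omega

theorem valuation_polyToF_le_exp_iff (p : K[X]) (b : ℤ) :
    Valued.v (polyToF K p) ≤ exp b ↔ ∀ m : ℕ, b < m → p.coeff m = 0 := by
  rw [← neg_neg b, LaurentSeries.valuation_le_iff_coeff_lt_eq_zero]
  constructor
  · intro h m hm
    simpa [coeff_polyToF] using h (-m) (by omega)
  · intro h k hk
    rw [coeff_polyToF]
    split_ifs
    · exact h _ (by omega)
    · rfl

/-- `deg γᵢⱼ ≤ Bᵢⱼ` for every entry, a negative bound meaning `γᵢⱼ = 0`. -/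
def degreeBoundedGL (K : Type) [Field K] {ι : Type*} [Fintype ι] [DecidableEq ι]
    (B : ι → ι → ℤ) : Set (GL ι K[X]) :=
  {γ | ∀ i j (m : ℕ), B i j < m → ((γ : Matrix ι ι K[X]) i j).coeff m = 0}

variable {ι : Type*} [Fintype ι] [DecidableEq ι] {B : ι → ι → ℤ} {γ : GL ι K[X]}

theorem inv_mem_degreeBoundedGL (n : ι → ℤ) (hγ : γ ∈ degreeBoundedGL K fun i j => n i - n j) :
    γ⁻¹ ∈ degreeBoundedGL K fun i j => n i - n j := by
  set w := Valued.v.comap (polyToF K)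
  have hw : ∀ p b, w p ≤ exp b ↔ ∀ m : ℕ, b < m → p.coeff m = 0 :=
    valuation_polyToF_le_exp_iff
  have hdet : w (Ring.inverse (γ : Matrix ι ι K[X]).det) ≤ 1 := by
    obtain ⟨a, -, ha⟩ := Polynomial.isUnit_iff.mp
      (isUnit_ringInverse.mpr ((Matrix.isUnit_iff_isUnit_det _).mp γ.isUnit))
    rw [← ha, ← exp_zero, hw]
    intro m hm
    rw [Polynomial.coeff_C, if_neg (by omega)]
  intro i j
  rw [← hw, Matrix.coe_units_inv, Matrix.inv_def, Matrix.smul_apply, smul_eq_mul, map_mul]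
  exact mul_le_of_le_one_of_le hdet
    (w.map_adjugate_le_exp _ n (fun k l => (hw _ _).mpr (hγ k l)) i j)

theorem eq_zero_of_mem_degreeBoundedGL (hγ : γ ∈ degreeBoundedGL K B) {i j : ι}
    (hij : B i j < 0) : (γ : Matrix ι ι K[X]) i j = 0 :=
  Polynomial.ext fun m => by simpa using hγ i j m (by omega)

theorem eq_C_of_mem_degreeBoundedGL (hγ : γ ∈ degreeBoundedGL K B) {i j : ι}
    (hij : B i j = 0) : (γ : Matrix ι ι K[X]) i j = C (((γ : Matrix ι ι K[X]) i j).coeff 0) := by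
  refine Polynomial.ext fun m => ?_
  rcases m with _ | m
  · simp
  · simpa [Polynomial.coeff_C] using hγ i j (m + 1) (by omega)

theorem degreeBoundedGL_mono {B' : ι → ι → ℤ} (h : ∀ i j, B i j < 0 ∨ B i j ≤ B' i j) :
    degreeBoundedGL K B ⊆ degreeBoundedGL K B' := by
  intro γ hγ i j m hm
  exact hγ i j m (by rcases h i j with h | h <;> omega)

theorem degreeBoundedGL_inter (B B' : ι → ι → ℤ) :
    degreeBoundedGL K B ∩ degreeBoundedGL K B' =
      degreeBoundedGL K fun i j => min (B i j) (B' i j) := by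
  ext γ
  simp only [Set.mem_inter_iff, degreeBoundedGL, Set.mem_ofPred_eq]
  refine ⟨fun ⟨h, h'⟩ i j m hm => ?_, fun h => ⟨fun i j m hm => ?_, fun i j m hm => ?_⟩⟩
  · rcases min_lt_iff.mp hm with hm | hm
    exacts [h i j m hm, h' i j m hm]
  all_goals exact h i j m (by omega)

end DegreeBounds

section Stabilizer

variable {K : Type} [Field K] {d : ℕ}

theorem actM_mul (g h : Matrix (Fin d) (Fin d) (LaurentSeries K))
    (L : Submodule (PowerSeries K) (Fin d → LaurentSeries K)) :
    actM K g (actM K h L) = actM K (g * h) L := by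
  rw [actM, actM, actM, ← Submodule.map_comp]
  congr 1
  ext v i
  simp [Matrix.mulVecLin_mul]

theorem actM_one (L : Submodule (PowerSeries K) (Fin d → LaurentSeries K)) :
    actM K 1 L = L := by
  rw [actM, Matrix.mulVecLin_one, LinearMap.restrictScalars_id, Submodule.map_id]

theorem glToF_mul (γ δ : GL (Fin d) K[X]) : glToF K (γ * δ) = glToF K γ * glToF K δ := by
  rw [glToF, glToF, glToF, Units.val_mul, Matrix.map_mul]

theorem glToF_one : glToF K (1 : GL (Fin d) K[X]) = 1 := by
  rw [glToF, Units.val_one, Matrix.map_one _ (map_zero _) (map_one _)]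

theorem actM_glToF_actM_glToF_inv (γ : GL (Fin d) K[X])
    (L : Submodule (PowerSeries K) (Fin d → LaurentSeries K)) :
    actM K (glToF K γ) (actM K (glToF K γ⁻¹) L) = L := by
  rw [actM_mul, ← glToF_mul, mul_inv_cancel, glToF_one, actM_one]

theorem actM_glToF_le_lattM_iff (γ : GL (Fin d) K[X]) (n : Fin d → ℤ) :
    actM K (glToF K γ) (lattM K n) ≤ lattM K n ↔ γ ∈ degreeBoundedGL K fun i j => n i - n j := by
  simp only [actM_le_lattM_iff, glToF, Matrix.map_apply, valuation_polyToF_le_exp_iff]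
  rfl

theorem stab_eq_degreeBoundedGL (n : Fin d → ℤ) :
    Stab K n = degreeBoundedGL K fun i j => n i - n j := by
  ext γ
  refine ⟨fun h => (actM_glToF_le_lattM_iff γ n).mp h.le, fun h => ?_⟩
  have hinv := (actM_glToF_le_lattM_iff γ⁻¹ n).mpr (inv_mem_degreeBoundedGL n h)
  refine le_antisymm ((actM_glToF_le_lattM_iff γ n).mpr h) ?_
  calc lattM K n = actM K (glToF K γ) (actM K (glToF K γ⁻¹) (lattM K n)) :=
        (actM_glToF_actM_glToF_inv γ _).symm
    _ ≤ actM K (glToF K γ) (lattM K n) := Submodule.map_mono hinv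

end Stabilizer

section Counting

variable {K : Type} [Field K]

theorem Polynomial.card_degreeLT (k : ℕ) : Nat.card (degreeLT K k) = Nat.card K ^ k := by
  rw [Nat.card_congr (degreeLTEquiv K k).toEquiv, Nat.card_fun, Nat.card_fin]

theorem mem_degreeLT_toNat_iff (p : K[X]) (b : ℤ) :
    p ∈ degreeLT K (b + 1).toNat ↔ ∀ m : ℕ, b < m → p.coeff m = 0 := by
  rw [Polynomial.mem_degreeLT, Polynomial.degree_lt_iff_coeff_zero]
  exact forall_congr' fun m => by constructor <;> intro h hm <;> exact h (by omega)

variable {ι : Type*} [Fintype ι] [DecidableEq ι] [LinearOrder ι]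

noncomputable def upperTriangularOf (u : ι → Kˣ) (f : {p : ι × ι // p.1 < p.2} → K[X]) :
    Matrix ι ι K[X] :=
  Matrix.of fun i j => if h : i < j then f ⟨(i, j), h⟩ else if i = j then C (u i : K) else 0

theorem isUnit_upperTriangularOf (u : ι → Kˣ) (f : {p : ι × ι // p.1 < p.2} → K[X]) :
    IsUnit (upperTriangularOf u f) := by
  rw [Matrix.isUnit_iff_isUnit_det, Matrix.det_of_isUpperTriangular]
  · simp [upperTriangularOf, IsUnit.prod_iff]
  · intro i j (hji : j < i)
    simp [upperTriangularOf, hji.not_gt, hji.ne']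

variable {B : ι → ι → ℤ} {γ : GL ι K[X]}

theorem isUpperTriangular_of_mem_degreeBoundedGL (hlower : ∀ i j, j < i → B i j < 0)
    (hγ : γ ∈ degreeBoundedGL K B) : (γ : Matrix ι ι K[X]).IsUpperTriangular :=
  fun i j hji => eq_zero_of_mem_degreeBoundedGL hγ (hlower i j hji)

theorem isUnit_coeff_zero_of_mem_degreeBoundedGL (hdiag : ∀ i, B i i = 0)
    (hlower : ∀ i j, j < i → B i j < 0) (hγ : γ ∈ degreeBoundedGL K B) (i : ι) :
    IsUnit (((γ : Matrix ι ι K[X]) i i).coeff 0) := by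
  have hdet := (Matrix.isUnit_iff_isUnit_det _).mp γ.isUnit
  rw [Matrix.det_of_isUpperTriangular (isUpperTriangular_of_mem_degreeBoundedGL hlower hγ),
    IsUnit.prod_iff] at hdet
  have hi := hdet i (Finset.mem_univ i)
  rwa [eq_C_of_mem_degreeBoundedGL hγ (hdiag i), Polynomial.isUnit_C] at hi

theorem upperTriangularOf_mem_degreeBoundedGL (hdiag : ∀ i, B i i = 0) (u : ι → Kˣ)
    (f : (p : {p : ι × ι // p.1 < p.2}) → degreeLT K (B p.1.1 p.1.2 + 1).toNat) :
    (isUnit_upperTriangularOf u fun p => (f p : K[X])).unit ∈ degreeBoundedGL K B := by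
  intro i j m hm
  simp only [IsUnit.unit_spec, upperTriangularOf, Matrix.of_apply]
  split_ifs with hij hij'
  · exact (mem_degreeLT_toNat_iff _ _).mp (f _).2 m hm
  · subst hij'
    rw [Polynomial.coeff_C, if_neg (by have := hdiag i; omega)]
  · exact Polynomial.coeff_zero m

noncomputable def degreeBoundedGLEquiv (hdiag : ∀ i, B i i = 0)
    (hlower : ∀ i j, j < i → B i j < 0) :
    (ι → Kˣ) × ((p : {p : ι × ι // p.1 < p.2}) → degreeLT K (B p.1.1 p.1.2 + 1).toNat) ≃
      degreeBoundedGL K B where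
  toFun x := ⟨_, upperTriangularOf_mem_degreeBoundedGL hdiag x.1 x.2⟩
  invFun γ := (fun i => (isUnit_coeff_zero_of_mem_degreeBoundedGL hdiag hlower γ.2 i).unit,
    fun p => ⟨(γ.1 : Matrix ι ι K[X]) p.1.1 p.1.2,
      (mem_degreeLT_toNat_iff _ _).mpr (γ.2 p.1.1 p.1.2)⟩)
  left_inv x := by
    refine Prod.ext (funext fun i => Units.ext ?_) (funext fun p => Subtype.ext ?_)
    · simp [upperTriangularOf]
    · simp [upperTriangularOf, p.2]
  right_inv γ := by
    refine Subtype.ext (Units.ext (Matrix.ext fun i j => ?_))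
    simp only [IsUnit.unit_spec, upperTriangularOf, Matrix.of_apply]
    rcases lt_trichotomy i j with hij | rfl | hji
    · simp [hij]
    · simp [← eq_C_of_mem_degreeBoundedGL γ.2 (hdiag i)]
    · simp [hji.not_gt, hji.ne', eq_zero_of_mem_degreeBoundedGL γ.2 (hlower i j hji)]

theorem card_degreeBoundedGL (hdiag : ∀ i, B i i = 0) (hlower : ∀ i j, j < i → B i j < 0) :
    Nat.card (degreeBoundedGL K B) = (Nat.card K - 1) ^ Fintype.card ι *
      Nat.card K ^ ∑ p : {p : ι × ι // p.1 < p.2}, (B p.1.1 p.1.2 + 1).toNat := by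
  rw [← Nat.card_congr (degreeBoundedGLEquiv hdiag hlower), Nat.card_prod, Nat.card_fun,
    Nat.card_pi, Nat.card_units, Nat.card_eq_fintype_card (α := ι)]
  simp [Polynomial.card_degreeLT, Finset.prod_pow_eq_pow_sum]

variable {d : ℕ}

theorem card_stab_of_strictAnti {n : Fin d → ℤ} (hn : StrictAnti n) :
    Nat.card (Stab K n) = (Nat.card K - 1) ^ d *
      Nat.card K ^ ∑ p : {p : Fin d × Fin d // p.1 < p.2}, (n p.1.1 - n p.1.2 + 1).toNat := by
  rw [stab_eq_degreeBoundedGL, card_degreeBoundedGL (by simp) fun i j h => by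
    have := hn h; omega, Fintype.card_fin]

theorem card_stab_inter_of_strictAnti {n n' : Fin d → ℤ} (hn : StrictAnti n)
    (hn' : StrictAnti n') :
    Nat.card ↥(Stab K n ∩ Stab K n') = (Nat.card K - 1) ^ d * Nat.card K ^
      ∑ p : {p : Fin d × Fin d // p.1 < p.2},
        (min (n p.1.1 - n p.1.2) (n' p.1.1 - n' p.1.2) + 1).toNat := by
  rw [stab_eq_degreeBoundedGL, stab_eq_degreeBoundedGL, degreeBoundedGL_inter,
    card_degreeBoundedGL (by simp) fun i j h => by have := hn h; have := hn' h; omega,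
    Fintype.card_fin]

end Counting

section FinThree

theorem sum_upperPairs_fin_three (f : Fin 3 → Fin 3 → ℕ) :
    ∑ p : {p : Fin 3 × Fin 3 // p.1 < p.2}, f p.1.1 p.1.2 = f 0 1 + f 0 2 + f 1 2 := by
  rw [← Finset.sum_subtype {(0, 1), (0, 2), (1, 2)} (by decide) fun p => f p.1 p.2]
  simp [add_assoc]

theorem strictAnti_vecCons_three {a b : ℤ} (hb : 0 < b) (hab : b < a) :
    StrictAnti ![a, b, 0] := by
  simp [Fin.strictAnti_iff_succ_lt, Fin.forall_fin_two, hb, hab]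

variable {K : Type} [Field K]

theorem card_stab_fin_three {a b : ℤ} (hb : 0 < b) (hab : b < a) :
    Nat.card (Stab K ![a, b, 0]) = (Nat.card K - 1) ^ 3 * Nat.card K ^ (2 * a + 3).toNat := by
  rw [card_stab_of_strictAnti (strictAnti_vecCons_three hb hab),
    sum_upperPairs_fin_three fun i j => (![a, b, 0] i - ![a, b, 0] j + 1).toNat]
  congr 2
  simp
  omega

theorem card_stab_inter_fin_three {a b : ℤ} (hb : 0 < b) (hab : b + 1 < a) :
    Nat.card ↥(Stab K ![a, b, 0] ∩ Stab K ![a, b + 1, 0]) =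
      (Nat.card K - 1) ^ 3 * Nat.card K ^ (2 * a + 2).toNat := by
  rw [card_stab_inter_of_strictAnti (strictAnti_vecCons_three hb (by omega))
      (strictAnti_vecCons_three (by omega) hab),
    sum_upperPairs_fin_three fun i j =>
      (min (![a, b, 0] i - ![a, b, 0] j) (![a, b + 1, 0] i - ![a, b + 1, 0] j) + 1).toNat]
  congr 2
  simp
  omega

end FinThree

open Matrix Polynomial in
/-- for `d = 3` and `n₁ > n₂ ≥ 1`:
(a) `S_{(n₁,n₂,0)} ⊆ S_{(n₁+1,n₂,0)}` with index `q²` (edge of type 8);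
(b) if `n₁ > n₂ + 1`, then `|S_{(n₁,n₂,0)} ∩ S_{(n₁,n₂+1,0)}| = (q-1)³q^{2n₁+2}` and this
intersection has index `q` in each of the two stabilizers (edge of type 11). -/
theorem edge_stabilizers_dim_three (Fq : Type) [Field Fq] [Fintype Fq]
    (q : ℕ) (hq : q = Fintype.card Fq)
    (n₁ n₂ : ℕ) (h₂ : 1 ≤ n₂) (h₁ : n₂ < n₁) :
    (Stab Fq (![(n₁ : ℤ), (n₂ : ℤ), 0] : Fin 3 → ℤ) ⊆
        Stab Fq (![(n₁ : ℤ) + 1, (n₂ : ℤ), 0] : Fin 3 → ℤ) ∧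
      Nat.card (Stab Fq (![(n₁ : ℤ) + 1, (n₂ : ℤ), 0] : Fin 3 → ℤ)) =
        q ^ 2 * Nat.card (Stab Fq (![(n₁ : ℤ), (n₂ : ℤ), 0] : Fin 3 → ℤ))) ∧
    (n₂ + 1 < n₁ →
      Nat.card ↥(Stab Fq (![(n₁ : ℤ), (n₂ : ℤ), 0] : Fin 3 → ℤ) ∩
          Stab Fq (![(n₁ : ℤ), (n₂ : ℤ) + 1, 0] : Fin 3 → ℤ)) =
        (q - 1) ^ 3 * q ^ (2 * n₁ + 2) ∧
      q * Nat.card ↥(Stab Fq (![(n₁ : ℤ), (n₂ : ℤ), 0] : Fin 3 → ℤ) ∩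
          Stab Fq (![(n₁ : ℤ), (n₂ : ℤ) + 1, 0] : Fin 3 → ℤ)) =
        Nat.card (Stab Fq (![(n₁ : ℤ), (n₂ : ℤ), 0] : Fin 3 → ℤ)) ∧
      q * Nat.card ↥(Stab Fq (![(n₁ : ℤ), (n₂ : ℤ), 0] : Fin 3 → ℤ) ∩
          Stab Fq (![(n₁ : ℤ), (n₂ : ℤ) + 1, 0] : Fin 3 → ℤ)) =
        Nat.card (Stab Fq (![(n₁ : ℤ), (n₂ : ℤ) + 1, 0] : Fin 3 → ℤ))) := by
  subst hq
  have hcard : Nat.card Fq = Fintype.card Fq := Nat.card_eq_fintype_card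
  have hS := card_stab_fin_three (K := Fq) (a := n₁) (b := n₂) (by omega) (by omega)
  have hS₁ := card_stab_fin_three (K := Fq) (a := n₁ + 1) (b := n₂) (by omega) (by omega)
  rw [hcard] at hS hS₁
  refine ⟨⟨?_, ?_⟩, fun hn => ?_⟩
  · rw [stab_eq_degreeBoundedGL, stab_eq_degreeBoundedGL]
    exact degreeBoundedGL_mono fun i j => by fin_cases i <;> fin_cases j <;> simp <;> omega
  · rw [hS, hS₁, show (2 * ((n₁ : ℤ) + 1) + 3).toNat = (2 * (n₁ : ℤ) + 3).toNat + 2 by omega,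
      pow_add]
    ring
  have hS₂ := card_stab_fin_three (K := Fq) (a := n₁) (b := n₂ + 1) (by omega) (by omega)
  have hI := card_stab_inter_fin_three (K := Fq) (a := n₁) (b := n₂) (by omega) (by omega)
  rw [hcard] at hS₂ hI
  have hexp : (2 * (n₁ : ℤ) + 3).toNat = (2 * (n₁ : ℤ) + 2).toNat + 1 := by omega
  refine ⟨?_, ?_, ?_⟩
  · rw [hI, show (2 * (n₁ : ℤ) + 2).toNat = 2 * n₁ + 2 by omega]
  · rw [hI, hS, hexp, pow_succ]
    ring
  · rw [hI, hS₂, hexp, pow_succ]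
    ring
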